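/- For each (α,β,γ,δ) ∈ ℝ⁴, the map T(α,β,γ,δ)(x¹,x²) = (e^α x¹ + β e^{cx²}cos(x²) + γ e^{cx²}sin(x²), x² + δ) is an affine diffeomorphism of M(c), i.e., it preserves the connection with Christoffel symbols Γ₂₂¹=(1+c²)x¹, Γ₂₂²=2c. -/

import Mathlib

noncomputable def e : Fin 2 → ℝ × ℝ
  | 0 => (1, 0)
  | 1 => (0, 1)

noncomputable def pd (i : Fin 2) (f : ℝ × ℝ → ℝ) (p : ℝ × ℝ) : ℝ :=
  fderiv ℝ f p (e i)

/-- Christoffel symbols of `M(c)`. -/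
noncomputable def Γ (c : ℝ) (i j k : Fin 2) (p : ℝ × ℝ) : ℝ :=
  if i = 1 ∧ j = 1 then (if k = 0 then (1 + c ^ 2) * p.1 else 2 * c) else 0

/-- The map `T(α,β,γ,δ)`. -/
noncomputable def T (c α β γ δ : ℝ) : ℝ × ℝ → ℝ × ℝ := fun p =>
  (Real.exp α * p.1 + β * Real.exp (c * p.2) * Real.cos p.2
      + γ * Real.exp (c * p.2) * Real.sin p.2,
    p.2 + δ)

/-- Components of `T(α,β,γ,δ)`. -/
noncomputable def Tc (c α β γ δ : ℝ) : Fin 2 → ℝ × ℝ → ℝ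
  | 0 => fun p => (T c α β γ δ p).1
  | 1 => fun p => (T c α β γ δ p).2

/-- A map `F` with components `Fc` is affine for the connection with Christoffel
symbols `Γ₁` (target `Γ₂`) iff
`Σ_m Γ₁ᵐ_{ab}(p)·∂_mFᵏ = Σ_{ij} Γ₂ᵏ_{ij}(Fp)·∂_aFⁱ·∂_bFʲ + ∂_a∂_bFᵏ`. -/
def Intertwines (Γ₁ Γ₂ : Fin 2 → Fin 2 → Fin 2 → ℝ × ℝ → ℝ)
    (F : ℝ × ℝ → ℝ × ℝ) (Fc : Fin 2 → ℝ × ℝ → ℝ) : Prop :=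
  ∀ a b k : Fin 2, ∀ p : ℝ × ℝ,
    ∑ m : Fin 2, Γ₁ a b m p * pd m (Fc k) p =
      (∑ i : Fin 2, ∑ j : Fin 2, Γ₂ i j k (F p) * pd a (Fc i) p * pd b (Fc j) p)
        + pd a (fun q => pd b (Fc k) q) p

/-! `T` has the form `(x¹, x²) ↦ (k x¹ + g(x²), x² + δ)` with `k = eᵅ ≠ 0` and
`g(y) = e^{cy}(β cos y + γ sin y)`. Since only `Γ₂₂ᵏ` is nonzero and `∂₁T² = 0`, `∂₂T² = 1`, the affine
condition reduces to the single equation `g'' = 2c g' - (1 + c²) g`: the linear ODE whose characteristic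
roots are `c ± i`, so that `g` solves it. -/

open ContinuousLinearMap

def shearMap (k δ : ℝ) (g : ℝ → ℝ) : ℝ × ℝ → ℝ × ℝ := fun p => (k * p.1 + g p.2, p.2 + δ)

def shearMapComponents (k δ : ℝ) (g : ℝ → ℝ) : Fin 2 → ℝ × ℝ → ℝ
  | 0 => fun p => k * p.1 + g p.2
  | 1 => fun p => p.2 + δ

theorem shearMap_bijective {k : ℝ} (hk : k ≠ 0) (δ : ℝ) (g : ℝ → ℝ) :
    Function.Bijective (shearMap k δ g) := by
  refine Function.bijective_iff_has_inverse.mpr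
    ⟨fun p => ((p.1 - g (p.2 - δ)) / k, p.2 - δ), fun p => ?_, fun p => ?_⟩
  · simp only [shearMap, add_sub_cancel_right]
    exact Prod.ext (by field_simp) rfl
  · simp only [shearMap, sub_add_cancel]
    exact Prod.ext (by field_simp; ring) rfl

section PartialDerivatives

variable {p : ℝ × ℝ} {g : ℝ → ℝ} {g' : ℝ}

theorem pd_const (i : Fin 2) (r : ℝ) : pd i (fun _ => r) p = 0 := by
  simp [pd]

theorem hasFDerivAt_mul_fst_add_comp_snd (k : ℝ) (hg : HasDerivAt g g' p.2) :
    HasFDerivAt (fun q : ℝ × ℝ => k * q.1 + g q.2) (k • fst ℝ ℝ ℝ + g' • snd ℝ ℝ ℝ) p :=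
  (hasFDerivAt_fst.const_mul k).add (hg.comp_hasFDerivAt p hasFDerivAt_snd)

theorem pd_zero_mul_fst_add_comp_snd (k : ℝ) (hg : HasDerivAt g g' p.2) :
    pd 0 (fun q => k * q.1 + g q.2) p = k := by
  simp [pd, (hasFDerivAt_mul_fst_add_comp_snd k hg).fderiv, e]

theorem pd_one_mul_fst_add_comp_snd (k : ℝ) (hg : HasDerivAt g g' p.2) :
    pd 1 (fun q => k * q.1 + g q.2) p = g' := by
  simp [pd, (hasFDerivAt_mul_fst_add_comp_snd k hg).fderiv, e]

theorem pd_zero_comp_snd (hg : HasDerivAt g g' p.2) : pd 0 (fun q => g q.2) p = 0 := by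
  simpa using pd_zero_mul_fst_add_comp_snd 0 hg

theorem pd_one_comp_snd (hg : HasDerivAt g g' p.2) : pd 1 (fun q => g q.2) p = g' := by
  simpa using pd_one_mul_fst_add_comp_snd 0 hg

end PartialDerivatives

section ShearMap

variable {k δ : ℝ} {g g' g'' : ℝ → ℝ}

theorem pd_zero_shearMapComponents_zero (hg : ∀ y, HasDerivAt g (g' y) y) (p : ℝ × ℝ) :
    pd 0 (shearMapComponents k δ g 0) p = k :=
  pd_zero_mul_fst_add_comp_snd k (hg p.2)

theorem pd_one_shearMapComponents_zero (hg : ∀ y, HasDerivAt g (g' y) y) (p : ℝ × ℝ) :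
    pd 1 (shearMapComponents k δ g 0) p = g' p.2 :=
  pd_one_mul_fst_add_comp_snd k (hg p.2)

theorem pd_zero_shearMapComponents_one (p : ℝ × ℝ) : pd 0 (shearMapComponents k δ g 1) p = 0 :=
  pd_zero_comp_snd ((hasDerivAt_id p.2).add_const δ)

theorem pd_one_shearMapComponents_one (p : ℝ × ℝ) : pd 1 (shearMapComponents k δ g 1) p = 1 :=
  pd_one_comp_snd ((hasDerivAt_id p.2).add_const δ)

theorem intertwines_shearMap (c : ℝ) (hg : ∀ y, HasDerivAt g (g' y) y)
    (hg' : ∀ y, HasDerivAt g' (g'' y) y)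
    (hode : ∀ y, g'' y = 2 * c * g' y - (1 + c ^ 2) * g y) :
    Intertwines (Γ c) (Γ c) (shearMap k δ g) (shearMapComponents k δ g) := by
  intro a b i p
  fin_cases a <;> fin_cases b <;> fin_cases i <;>
    simp [Γ, Fin.sum_univ_two, shearMap, pd_zero_shearMapComponents_zero hg,
      pd_one_shearMapComponents_zero hg, pd_zero_shearMapComponents_one,
      pd_one_shearMapComponents_one, pd_const, pd_zero_comp_snd (hg' _),
      pd_one_comp_snd (hg' _)]
  linear_combination -hode p.2

end ShearMap

noncomputable def dampedOscillation (c a b : ℝ) (y : ℝ) : ℝ :=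
  Real.exp (c * y) * (a * Real.cos y + b * Real.sin y)

theorem hasDerivAt_dampedOscillation (c a b y : ℝ) :
    HasDerivAt (dampedOscillation c a b) (dampedOscillation c (a * c + b) (b * c - a) y) y := by
  have hexp : HasDerivAt (fun y => Real.exp (c * y)) (Real.exp (c * y) * c) y := by
    simpa using ((hasDerivAt_id y).const_mul c).exp
  have htrig : HasDerivAt (fun y => a * Real.cos y + b * Real.sin y)
      (a * -Real.sin y + b * Real.cos y) y :=
    ((Real.hasDerivAt_cos y).const_mul a).add ((Real.hasDerivAt_sin y).const_mul b)
  exact (hexp.mul htrig).congr_deriv (by rw [dampedOscillation]; ring)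

theorem dampedOscillation_ode (c a b y : ℝ) :
    dampedOscillation c ((a * c + b) * c + (b * c - a)) ((b * c - a) * c - (a * c + b)) y =
      2 * c * dampedOscillation c (a * c + b) (b * c - a) y
        - (1 + c ^ 2) * dampedOscillation c a b y := by
  simp only [dampedOscillation]
  ring

theorem T_eq_shearMap (c α β γ δ : ℝ) :
    T c α β γ δ = shearMap (Real.exp α) δ (dampedOscillation c β γ) := by
  ext p <;> simp only [T, shearMap, dampedOscillation]
  ring

theorem Tc_eq_shearMapComponents (c α β γ δ : ℝ) :
    Tc c α β γ δ = shearMapComponents (Real.exp α) δ (dampedOscillation c β γ) := by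
  ext i p
  fin_cases i <;> simp [Tc, shearMapComponents, T_eq_shearMap, shearMap]

/-- each `T(α,β,γ,δ)` is an affine diffeomorphism of `M(c)`. -/
theorem T_affine_diffeo (c α β γ δ : ℝ) :
    Function.Bijective (T c α β γ δ) ∧
    Intertwines (Γ c) (Γ c) (T c α β γ δ) (Tc c α β γ δ) := by
  rw [Tc_eq_shearMapComponents, T_eq_shearMap]
  exact ⟨shearMap_bijective (Real.exp_pos α).ne' δ _,
    intertwines_shearMap c (hasDerivAt_dampedOscillation c β γ)
      (hasDerivAt_dampedOscillation c _ _) (dampedOscillation_ode c β γ)⟩
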